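/- arXiv:2101.02470 — 2 statements merged into one kernel-verified Lean document; each statement's English description precedes it below -/
import Mathlib

section
/- Let 1 < p < ∞ with conjugate exponent q = p/(p−1), let w be a strictly positive density on U satisfying (★) and the Smirnov property for exponent q, and let g_i ∈ L^p(w) (1 ≤ i ≤ n) be given marginal data. Suppose Φ_i ∈ L^1(w) and Ψ_i ∈ L^1(w) (each depending only on ξ_i) both solve the system: ∫ sign(Φ̄(ξ))|Φ̄(ξ)|^{1/(p−1)} w(ξ)dξ_i^c = g_i(ξ_i) and ∫ sign(Ψ̄(ξ))|Ψ̄(ξ)|^{1/(p−1)} w(ξ)dξ_i^c = g_i(ξ_i) for all 1 ≤ i ≤ n, together with the normalizations ∫ Φ_i w_i dξ_i = ∫ Ψ_i w_i dξ_i = 0 for 2 ≤ i ≤ n, where Φ̄ := (1/n)∑_i Φ_i and Ψ̄ := (1/n)∑_i Ψ_i, and suppose both sign(Φ̄)|Φ̄|^{1/(p−1)} and sign(Ψ̄)|Ψ̄|^{1/(p−1)} belong to L^p(w). Then Φ_i = Ψ_i holds w_i-almost everywhere for every 1 ≤ i ≤ n. -/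
open MeasureTheory

noncomputable section

/-- `I` is a closed interval of the form `(-∞,b]`, `[a,∞)`, or `[a,b]` with `a < b`. -/
def IsClosedIntervalType (I : Set ℝ) : Prop :=
  (∃ b : ℝ, I = Set.Iic b) ∨ (∃ a : ℝ, I = Set.Ici a) ∨ (∃ a b : ℝ, a < b ∧ I = Set.Icc a b)

/-- Integrate out all coordinates except the `i`-th one, at value `t` of the `i`-th
coordinate: `margC i F t = ∫ F dξᵢᶜ` evaluated at `ξᵢ = t`. -/
def margC {n : ℕ} (i : Fin n) (F : (Fin n → ℝ) → ℝ) (t : ℝ) : ℝ :=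
  ∫ y : {j : Fin n // j ≠ i} → ℝ, F (fun j => if h : j = i then t else y ⟨j, h⟩)

/-- Integrate out the `i`-th coordinate: `margO i F ξ = ∫ F dξᵢ`, a function of `ξ`
depending only on `ξᵢᶜ`. -/
def margO {n : ℕ} (i : Fin n) (F : (Fin n → ℝ) → ℝ) (ξ : Fin n → ℝ) : ℝ :=
  ∫ t : ℝ, F (Function.update ξ i t)

/-- The weighted measure `w(ξ)dξ`; `L^p(w)` is `ℒ^p` of this measure. -/
def wMeasure {n : ℕ} (w : (Fin n → ℝ) → ℝ) : Measure (Fin n → ℝ) :=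
  volume.withDensity (fun ξ => ENNReal.ofReal (w ξ))

/-- `w` is a strictly positive density on `U` (extended by zero off `U`). -/
structure IsDensityOn {n : ℕ} (w : (Fin n → ℝ) → ℝ) (U : Set (Fin n → ℝ)) : Prop where
  measurable : Measurable w
  pos : ∀ ξ ∈ U, 0 < w ξ
  zero : ∀ ξ ∉ U, w ξ = 0
  integral_one : (∫ ξ, w ξ) = 1

/-- Condition (★): `wᵢ·wᵢᶜ/w ∈ L^p(w)` for all `1 ≤ i ≤ n`. -/
def StarCondition {n : ℕ} (w : (Fin n → ℝ) → ℝ) (p : ℝ) : Prop :=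
  ∀ i : Fin n,
    MemLp (fun ξ => margC i w (ξ i) * margO i w ξ / w ξ) (ENNReal.ofReal p) (wMeasure w)

/-- The Smirnov property for exponent `q`. -/
def SmirnovProperty {n : ℕ} (w : (Fin n → ℝ) → ℝ) (q : ℝ) : Prop :=
  ∀ Ψ : Fin n → ℝ → ℝ,
    (∀ i, MemLp (fun ξ => Ψ i (ξ i)) 1 (wMeasure w)) →
    MemLp (fun ξ => (1 / (n : ℝ)) * ∑ i, Ψ i (ξ i)) (ENNReal.ofReal q) (wMeasure w) →
    ∀ i, MemLp (fun ξ => Ψ i (ξ i)) (ENNReal.ofReal q) (wMeasure w)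

/-- Membership in `N = {φ ∈ L^p(w) : ∫ φ w dξᵢᶜ = 0 a.e., ∀ i}`. -/
def MemN {n : ℕ} (w : (Fin n → ℝ) → ℝ) (p : ℝ) (φ : (Fin n → ℝ) → ℝ) : Prop :=
  MemLp φ (ENNReal.ofReal p) (wMeasure w) ∧
  ∀ i : Fin n, ∀ᵐ t : ℝ, margC i (fun ξ => φ ξ * w ξ) t = 0

/-!
Write `S x = sign x * |x| ^ (1/(p-1))`. Since `|S Φ̄| ^ p = |Φ̄| ^ q`, the means `Φ̄, Ψ̄` lie in
`L^q(w)`, and the Smirnov property puts every `Φⱼ - Ψⱼ` in `L^q(w)`. The two marginal systems say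
that `S Φ̄ - S Ψ̄ ∈ L^p(w)` is orthogonal to every function of a single coordinate, hence to
`Φ̄ - Ψ̄`. As `S` is strictly increasing, `(S Φ̄ - S Ψ̄) (Φ̄ - Ψ̄) ≥ 0` with equality only where
`Φ̄ = Ψ̄`, so `∑ⱼ (Φⱼ - Ψⱼ)(ξⱼ) = 0` almost everywhere on the box `U`. Freezing all coordinates but
the `i`-th at a suitable point shows that `Φᵢ - Ψᵢ` is constant on `Iᵢ`; the normalizations, and
for the first coordinate the vanishing mean of the whole sum, force the constant to be `0`.
-/

open Set

def signPow (r x : ℝ) : ℝ := Real.sign x * |x| ^ r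

lemma signPow_neg (r x : ℝ) : signPow r (-x) = -signPow r x := by
  simp [signPow, Real.sign_neg]

lemma signPow_of_nonneg {r x : ℝ} (hr : r ≠ 0) (hx : 0 ≤ x) : signPow r x = x ^ r := by
  rcases hx.eq_or_lt with rfl | hx
  · simp [signPow, Real.zero_rpow hr]
  · simp [signPow, Real.sign_of_pos hx, abs_of_pos hx]

lemma strictMono_signPow {r : ℝ} (hr : 0 < r) : StrictMono (signPow r) :=
  strictMono_of_odd_strictMonoOn_nonneg (signPow_neg r)
    ((Real.strictMonoOn_rpow_Ici_of_exponent_pos hr).congr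
      fun _ hx => (signPow_of_nonneg hr.ne' hx).symm)

lemma abs_signPow {r : ℝ} (hr : r ≠ 0) (x : ℝ) : |signPow r x| = |x| ^ r := by
  rcases eq_or_ne x 0 with rfl | hx
  · simp [signPow, Real.zero_rpow hr]
  · rw [signPow, abs_mul, abs_of_nonneg (Real.rpow_nonneg (abs_nonneg x) r)]
    rcases Real.sign_apply_eq_of_ne_zero x hx with h | h <;> simp [h]

lemma StrictMono.sub_mul_sub_pos {R : Type*} [Ring R] [LinearOrder R] [IsStrictOrderedRing R]
    {f : R → R} (hf : StrictMono f) {a b : R} (hab : a ≠ b) : 0 < (f a - f b) * (a - b) := by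
  rcases hab.lt_or_gt with h | h
  · exact mul_pos_of_neg_of_neg (sub_neg.2 (hf h)) (sub_neg.2 h)
  · exact mul_pos (sub_pos.2 (hf h)) (sub_pos.2 h)

lemma ae_eq_of_integral_sub_mul_sub_eq_zero {α : Type*} [MeasurableSpace α] {μ : Measure α}
    {f : ℝ → ℝ} (hf : StrictMono f) {F G : α → ℝ}
    (hint : Integrable (fun x => (f (F x) - f (G x)) * (F x - G x)) μ)
    (h : ∫ x, (f (F x) - f (G x)) * (F x - G x) ∂μ = 0) : F =ᵐ[μ] G := by
  have hnonneg : 0 ≤ᵐ[μ] fun x => (f (F x) - f (G x)) * (F x - G x) := ae_of_all _ fun x => by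
    rcases eq_or_ne (F x) (G x) with hx | hx
    · simp [hx]
    · exact (hf.sub_mul_sub_pos hx).le
  filter_upwards [(integral_eq_zero_iff_of_nonneg_ae hnonneg hint).1 h] with x hx
  by_contra hne
  exact (hf.sub_mul_sub_pos hne).ne' hx

lemma MeasureTheory.MemLp.of_signPow {α : Type*} [MeasurableSpace α] {μ : Measure α} {F : α → ℝ}
    {p : ENNReal} {r : ℝ} (hr : 0 < r) (hF : AEStronglyMeasurable F μ)
    (h : MemLp (fun x => signPow r (F x)) p μ) : MemLp F (p * ENNReal.ofReal r) μ := by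
  have hr' : ENNReal.ofReal r ≠ 0 := ENNReal.ofReal_pos.2 hr |>.ne'
  refine (memLp_norm_rpow_iff hF hr' ENNReal.ofReal_ne_top).1 ?_
  rw [ENNReal.mul_div_cancel_right hr' ENNReal.ofReal_ne_top, ENNReal.toReal_ofReal hr.le]
  convert h.norm using 2 with x
  rw [Real.norm_eq_abs, Real.norm_eq_abs, abs_signPow hr.ne']

section SplitCoord

variable {ι α : Type*} [DecidableEq ι]

-- Built from `piEquivPiSubtypeProd` rather than `Equiv.funSplitAt` so that
-- `(splitCoord i).symm (t, y)` is definitionally the point at which `margC` evaluates.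
def splitCoord [MeasurableSpace α] (i : ι) : (ι → α) ≃ᵐ α × ({j // j ≠ i} → α) :=
  (MeasurableEquiv.piEquivPiSubtypeProd (fun _ => α) (· = i)).trans
    ((MeasurableEquiv.funUnique {j // j = i} α).prodCongr (MeasurableEquiv.refl _))

lemma splitCoord_symm_apply [MeasurableSpace α] (i : ι) (t : α) (y : {j // j ≠ i} → α) :
    (splitCoord i).symm (t, y) = fun j => if h : j = i then t else y ⟨j, h⟩ := rfl

lemma measurePreserving_splitCoord [Fintype ι] [MeasureSpace α] [SigmaFinite (volume : Measure α)]
    (i : ι) :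
    MeasurePreserving (splitCoord (α := α) i) volume (volume.prod volume) := by
  have h := volume_preserving_piEquivPiSubtypeProd (fun _ : ι => α) (· = i)
  rw [Measure.volume_eq_prod, Subsingleton.elim (Subtype.fintype _) (Fintype.subtypeEq i)] at h
  exact ((volume_preserving_funUnique {j // j = i} α).prod (MeasurePreserving.id _)).comp h

lemma sum_splitCoord_symm_apply [Fintype ι] [MeasurableSpace α] {M : Type*} [AddCommMonoid M]
    (i : ι) (f : ι → α → M) (t : α) (y : {j // j ≠ i} → α) :
    ∑ j, f j ((splitCoord i).symm (t, y) j) = f i t + ∑ j : {j // j ≠ i}, f j (y j) := by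
  rw [Fintype.sum_eq_add_sum_subtype_ne _ i]
  simp only [splitCoord_symm_apply, dif_pos]
  exact congrArg _ (Fintype.sum_congr _ _ fun j => by rw [dif_neg j.2])

lemma splitCoord_symm_mem_pi [MeasurableSpace α] (i : ι) (I : ι → Set α) (t : α)
    (y : {j // j ≠ i} → α) :
    (splitCoord i).symm (t, y) ∈ univ.pi I ↔ t ∈ I i ∧ y ∈ univ.pi fun j : {j // j ≠ i} => I j := by
  simp only [mem_univ_pi, splitCoord_symm_apply]
  refine ⟨fun h => ⟨by simpa using h i, fun j => by simpa [j.2] using h j⟩, ?_⟩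
  rintro ⟨ht, hy⟩ j
  by_cases hj : j = i
  · subst hj
    simpa using ht
  · simpa [hj] using hy ⟨j, hj⟩

end SplitCoord

lemma exists_ae_eq_const_of_ae_prod {α β γ : Type*} [MeasurableSpace α] [MeasurableSpace β]
    {μ : Measure α} {ν : Measure β} [SFinite μ] [SFinite ν] {A : Set α} {B : Set β}
    (hB : ν B ≠ 0) {f : α → γ} {g : β → γ}
    (h : ∀ᵐ z ∂μ.prod ν, z.1 ∈ A → z.2 ∈ B → f z.1 = g z.2) :
    ∃ c, ∀ᵐ t ∂μ, t ∈ A → f t = c := by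
  have h' : ∀ᵐ y ∂ν, ∀ᵐ t ∂μ, t ∈ A → y ∈ B → f t = g y :=
    Measure.ae_ae_of_ae_prod (Measure.measurePreserving_swap.quasiMeasurePreserving.ae h)
  obtain ⟨y, hyB, hy⟩ : ∃ y ∈ B, ∀ᵐ t ∂μ, t ∈ A → y ∈ B → f t = g y := by
    by_contra hne
    exact hB (measure_mono_null (fun y hyB hy => hne ⟨y, hyB, hy⟩) (ae_iff.1 h'))
  exact ⟨g y, by filter_upwards [hy] with t ht htA using ht htA hyB⟩

lemma exists_ae_eq_const_of_sum_eq_zero {ι α : Type*} [Fintype ι] [DecidableEq ι]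
    [MeasureSpace α] [SigmaFinite (volume : Measure α)] {I : ι → Set α}
    (hI : ∀ j, volume (I j) ≠ 0) {D : ι → α → ℝ}
    (h : ∀ᵐ ξ, ξ ∈ univ.pi I → ∑ j, D j (ξ j) = 0) (i : ι) :
    ∃ c, ∀ᵐ t, t ∈ I i → D i t = c := by
  refine exists_ae_eq_const_of_ae_prod (μ := volume) (ν := volume)
    (B := univ.pi fun j : {j // j ≠ i} => I j) (g := fun y => -∑ j : {j // j ≠ i}, D j (y j)) ?_ ?_
  · rw [volume_pi_pi]
    exact Finset.prod_ne_zero_iff.2 fun j _ => hI j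
  · filter_upwards [((measurePreserving_splitCoord i).symm _).quasiMeasurePreserving.ae h]
      with ⟨t, y⟩ hz ht hy
    have hsum := hz ((splitCoord_symm_mem_pi i I t y).2 ⟨ht, hy⟩)
    rw [sum_splitCoord_symm_apply] at hsum
    exact eq_neg_of_add_eq_zero_left hsum

section Marginal

variable {n : ℕ} (i : Fin n)

lemma integrable_comp_splitCoord_symm {H : (Fin n → ℝ) → ℝ} (hH : Integrable H) :
    Integrable (fun z => H ((splitCoord i).symm z)) (volume.prod volume) :=
  (((measurePreserving_splitCoord i).symm _).integrable_comp_emb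
    (splitCoord i).symm.measurableEmbedding).2 hH

lemma integral_eq_integral_margC {H : (Fin n → ℝ) → ℝ} (hH : Integrable H) :
    ∫ ξ, H ξ = ∫ t, margC i H t := by
  rw [← ((measurePreserving_splitCoord i).symm _).integral_comp
    (splitCoord i).symm.measurableEmbedding, integral_prod _ (integrable_comp_splitCoord_symm i hH)]
  rfl

lemma integral_mul_apply_eq_integral_mul_margC (f : ℝ → ℝ) {H : (Fin n → ℝ) → ℝ}
    (hH : Integrable fun ξ => f (ξ i) * H ξ) :
    ∫ ξ, f (ξ i) * H ξ = ∫ t, f t * margC i H t := by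
  rw [integral_eq_integral_margC i hH]
  congr 1 with t
  rw [margC, margC, ← integral_const_mul]
  simp only [dif_pos]

lemma ae_margC_sub {F G : (Fin n → ℝ) → ℝ} (hF : Integrable F) (hG : Integrable G) :
    ∀ᵐ t, margC i (fun ξ => F ξ - G ξ) t = margC i F t - margC i G t := by
  filter_upwards [(integrable_comp_splitCoord_symm i hF).prod_right_ae,
    (integrable_comp_splitCoord_symm i hG).prod_right_ae] with t hFt hGt
  exact integral_sub hFt hGt

lemma margC_eq_zero_of_notMem {I : Fin n → Set ℝ} {w : (Fin n → ℝ) → ℝ}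
    (hw : ∀ ξ ∉ univ.pi I, w ξ = 0) {t : ℝ} (ht : t ∉ I i) : margC i w t = 0 := by
  have hzero (y : {j // j ≠ i} → ℝ) : w ((splitCoord i).symm (t, y)) = 0 :=
    hw _ fun h => ht ((splitCoord_symm_mem_pi i I t y).1 h).1
  simp only [margC, ← splitCoord_symm_apply, hzero, integral_zero]

lemma measurable_margC {w : (Fin n → ℝ) → ℝ} (hw : Measurable w) : Measurable (margC i w) :=
  (hw.comp (splitCoord i).symm.measurable).stronglyMeasurable.integral_prod_right'.measurable

end Marginal

section Density

variable {n : ℕ} {w : (Fin n → ℝ) → ℝ}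

lemma IsDensityOn.nonneg {U : Set (Fin n → ℝ)} (hw : IsDensityOn w U) (ξ : Fin n → ℝ) :
    0 ≤ w ξ := by
  by_cases h : ξ ∈ U
  · exact (hw.pos ξ h).le
  · exact (hw.zero ξ h).ge

lemma IsDensityOn.integrable {U : Set (Fin n → ℝ)} (hw : IsDensityOn w U) : Integrable w := by
  by_contra h
  exact zero_ne_one (integral_undef h ▸ hw.integral_one)

lemma IsDensityOn.isProbabilityMeasure {U : Set (Fin n → ℝ)} (hw : IsDensityOn w U) :
    IsProbabilityMeasure (wMeasure w) := by
  constructor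
  rw [wMeasure, withDensity_apply _ MeasurableSet.univ, setLIntegral_univ,
    ← ofReal_integral_eq_lintegral_ofReal hw.integrable (ae_of_all _ hw.nonneg),
    hw.integral_one, ENNReal.ofReal_one]

lemma integral_wMeasure (hw : Measurable w) (hw₀ : ∀ ξ, 0 ≤ w ξ) (f : (Fin n → ℝ) → ℝ) :
    ∫ ξ, f ξ ∂wMeasure w = ∫ ξ, f ξ * w ξ := by
  rw [wMeasure, integral_withDensity_eq_integral_toReal_smul hw.ennreal_ofReal
    (ae_of_all _ fun _ => ENNReal.ofReal_lt_top)]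
  simp_rw [ENNReal.toReal_ofReal (hw₀ _), smul_eq_mul, mul_comm]

lemma integrable_wMeasure_iff (hw : Measurable w) (hw₀ : ∀ ξ, 0 ≤ w ξ) {f : (Fin n → ℝ) → ℝ} :
    Integrable f (wMeasure w) ↔ Integrable fun ξ => f ξ * w ξ := by
  rw [wMeasure, integrable_withDensity_iff hw.ennreal_ofReal
    (ae_of_all _ fun _ => ENNReal.ofReal_lt_top)]
  simp_rw [ENNReal.toReal_ofReal (hw₀ _)]

lemma integral_apply_wMeasure (hw : Measurable w) (hw₀ : ∀ ξ, 0 ≤ w ξ) (i : Fin n) {f : ℝ → ℝ}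
    (hf : Integrable (fun ξ => f (ξ i)) (wMeasure w)) :
    ∫ ξ, f (ξ i) ∂wMeasure w = ∫ t, f t * margC i w t := by
  rw [integral_wMeasure hw hw₀]
  exact integral_mul_apply_eq_integral_mul_margC i f ((integrable_wMeasure_iff hw hw₀).1 hf)

lemma integral_mul_apply_eq_zero_of_margC_eq_zero (hw : Measurable w) (hw₀ : ∀ ξ, 0 ≤ w ξ)
    (i : Fin n) {E : (Fin n → ℝ) → ℝ} (hE : ∀ᵐ t, margC i (fun ξ => E ξ * w ξ) t = 0) {f : ℝ → ℝ}
    (hf : Integrable (fun ξ => E ξ * f (ξ i)) (wMeasure w)) :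
    ∫ ξ, E ξ * f (ξ i) ∂wMeasure w = 0 := by
  have hf' : Integrable fun ξ => f (ξ i) * (E ξ * w ξ) := by
    simpa only [mul_comm, mul_left_comm] using (integrable_wMeasure_iff hw hw₀).1 hf
  calc ∫ ξ, E ξ * f (ξ i) ∂wMeasure w = ∫ ξ, f (ξ i) * (E ξ * w ξ) := by
        rw [integral_wMeasure hw hw₀]
        congr 1 with ξ
        ring
    _ = ∫ t, f t * margC i (fun ξ => E ξ * w ξ) t :=
        integral_mul_apply_eq_integral_mul_margC i f hf'
    _ = 0 := integral_eq_zero_of_ae (by filter_upwards [hE] with t ht using by simp [ht])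

end Density

-- The paper's `Φ̄`.
def coordMean {n : ℕ} (Φ : Fin n → ℝ → ℝ) (ξ : Fin n → ℝ) : ℝ := 1 / (n : ℝ) * ∑ j, Φ j (ξ j)

lemma coordMean_ae_eq_of_margC_eq {n : ℕ} {w : (Fin n → ℝ) → ℝ} (hw : Measurable w)
    (hw₀ : ∀ ξ, 0 ≤ w ξ) [IsFiniteMeasure (wMeasure w)] {p q : ℝ} (hpq : p.HolderConjugate q)
    (hsmir : SmirnovProperty w q) {Φ Ψ : Fin n → ℝ → ℝ}
    (hΦ1 : ∀ j, MemLp (fun ξ => Φ j (ξ j)) 1 (wMeasure w))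
    (hΨ1 : ∀ j, MemLp (fun ξ => Ψ j (ξ j)) 1 (wMeasure w))
    (hΦp : MemLp (fun ξ => signPow (1 / (p - 1)) (coordMean Φ ξ)) (ENNReal.ofReal p) (wMeasure w))
    (hΨp : MemLp (fun ξ => signPow (1 / (p - 1)) (coordMean Ψ ξ)) (ENNReal.ofReal p) (wMeasure w))
    (hmarg : ∀ j, ∀ᵐ t, margC j (fun ξ => signPow (1 / (p - 1)) (coordMean Φ ξ) * w ξ) t =
      margC j (fun ξ => signPow (1 / (p - 1)) (coordMean Ψ ξ) * w ξ) t) :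
    coordMean Φ =ᵐ[wMeasure w] coordMean Ψ := by
  set r := 1 / (p - 1)
  have hr : 0 < r := one_div_pos.2 (sub_pos.2 hpq.lt)
  have hpr : ENNReal.ofReal p * ENNReal.ofReal r = ENNReal.ofReal q := by
    rw [← ENNReal.ofReal_mul hpq.nonneg, hpq.conjugate_eq, mul_one_div]
  have hmeas (Φ : Fin n → ℝ → ℝ) (hΦ1 : ∀ j, MemLp (fun ξ => Φ j (ξ j)) 1 (wMeasure w)) :
      AEStronglyMeasurable (coordMean Φ) (wMeasure w) := by
    unfold coordMean
    exact (Finset.aestronglyMeasurable_fun_sum _ fun j _ => (hΦ1 j).1).const_mul _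
  have hΦq := hsmir Φ hΦ1 (by rw [← hpr]; exact hΦp.of_signPow hr (hmeas Φ hΦ1))
  have hΨq := hsmir Ψ hΨ1 (by rw [← hpr]; exact hΨp.of_signPow hr (hmeas Ψ hΨ1))
  set E := fun ξ => signPow r (coordMean Φ ξ) - signPow r (coordMean Ψ ξ)
  have hE : MemLp E (ENNReal.ofReal p) (wMeasure w) := hΦp.sub hΨp
  have hEmarg (j : Fin n) : ∀ᵐ t, margC j (fun ξ => E ξ * w ξ) t = 0 := by
    have hint (Φ : Fin n → ℝ → ℝ)
        (hΦp : MemLp (fun ξ => signPow r (coordMean Φ ξ)) (ENNReal.ofReal p) (wMeasure w)) :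
        Integrable fun ξ => signPow r (coordMean Φ ξ) * w ξ :=
      (integrable_wMeasure_iff hw hw₀).1 (hΦp.integrable (ENNReal.one_le_ofReal.2 hpq.lt.le))
    filter_upwards [hmarg j, ae_margC_sub j (hint Φ hΦp) (hint Ψ hΨp)] with t h hsub
    simp only [E, sub_mul, hsub, h, sub_self]
  have hEint (j : Fin n) : Integrable (fun ξ => E ξ * (Φ j (ξ j) - Ψ j (ξ j))) (wMeasure w) :=
    have := hpq.ennrealOfReal
    hE.integrable_mul ((hΦq j).sub (hΨq j))
  have hsplit : (fun ξ => E ξ * (coordMean Φ ξ - coordMean Ψ ξ)) =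
      fun ξ => 1 / (n : ℝ) * ∑ j, E ξ * (Φ j (ξ j) - Ψ j (ξ j)) := by
    funext ξ
    simp only [coordMean, ← Finset.mul_sum, Finset.sum_sub_distrib]
    ring
  have hint : Integrable (fun ξ => E ξ * (coordMean Φ ξ - coordMean Ψ ξ)) (wMeasure w) := by
    rw [hsplit]
    exact (integrable_finsetSum _ fun j _ => hEint j).const_mul _
  have hzero : ∫ ξ, E ξ * (coordMean Φ ξ - coordMean Ψ ξ) ∂wMeasure w = 0 := by
    rw [hsplit, integral_const_mul, integral_finsetSum _ fun j _ => hEint j,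
      Finset.sum_eq_zero fun j _ => integral_mul_apply_eq_zero_of_margC_eq_zero hw hw₀ j
        (hEmarg j) (f := fun t => Φ j t - Ψ j t) (hEint j), mul_zero]
  exact ae_eq_of_integral_sub_mul_sub_eq_zero (strictMono_signPow hr) hint hzero

lemma ae_eq_zero_of_sum_eq_zero {n : ℕ} {I : Fin n → Set ℝ} (hI : ∀ j, volume (I j) ≠ 0)
    {w : (Fin n → ℝ) → ℝ} (hw : IsDensityOn w (univ.pi I)) {D : Fin n → ℝ → ℝ}
    (hD : ∀ j, Integrable (fun ξ => D j (ξ j)) (wMeasure w))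
    (hsum : ∀ᵐ ξ ∂wMeasure w, ∑ j, D j (ξ j) = 0) (k : Fin n)
    (hmean : ∀ j ≠ k, ∫ ξ, D j (ξ j) ∂wMeasure w = 0) (i : Fin n) :
    ∀ᵐ t ∂volume.withDensity (fun s => ENNReal.ofReal (margC i w s)), D i t = 0 := by
  have hmean_i : ∫ ξ, D i (ξ i) ∂wMeasure w = 0 := by
    rcases ne_or_eq i k with hik | rfl
    · exact hmean i hik
    have htotal : ∑ j, ∫ ξ, D j (ξ j) ∂wMeasure w = 0 := by
      rw [← integral_finsetSum _ fun j _ => hD j]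
      exact integral_eq_zero_of_ae hsum
    rwa [Finset.sum_eq_single i (fun j _ hj => hmean j hj) (by simp)] at htotal
  have hsumU : ∀ᵐ ξ, ξ ∈ univ.pi I → ∑ j, D j (ξ j) = 0 := by
    rw [wMeasure, ae_withDensity_iff hw.measurable.ennreal_ofReal] at hsum
    filter_upwards [hsum] with ξ h hξ using h (ENNReal.ofReal_pos.2 (hw.pos ξ hξ)).ne'
  obtain ⟨c, hc⟩ := exists_ae_eq_const_of_sum_eq_zero hI hsumU i
  have hwi_zero {t : ℝ} (ht : t ∉ I i) : margC i w t = 0 := margC_eq_zero_of_notMem i hw.zero ht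
  have hc_zero : c = 0 := by
    calc c = c * ∫ ξ, w ξ := by rw [hw.integral_one, mul_one]
      _ = ∫ t, c * margC i w t := by
        rw [integral_const_mul, integral_eq_integral_margC i hw.integrable]
      _ = ∫ t, D i t * margC i w t := integral_congr_ae <| by
        filter_upwards [hc] with t ht
        by_cases htI : t ∈ I i
        · rw [ht htI]
        · simp [hwi_zero htI]
      _ = 0 := by rw [← integral_apply_wMeasure hw.measurable hw.nonneg i (hD i), hmean_i]
  rw [ae_withDensity_iff (measurable_margC i hw.measurable).ennreal_ofReal]
  filter_upwards [hc] with t ht hwt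
  have htI : t ∈ I i := by_contra fun htI => hwt (by rw [hwi_zero htI, ENNReal.ofReal_zero])
  rw [ht htI, hc_zero]

lemma IsClosedIntervalType.volume_ne_zero {I : Set ℝ} (hI : IsClosedIntervalType I) :
    volume I ≠ 0 := by
  rcases hI with ⟨b, rfl⟩ | ⟨a, rfl⟩ | ⟨a, b, hab, rfl⟩
  · simp
  · simp
  · simpa using hab

theorem uniqueness_of_solutions_general
    {n : ℕ} (I : Fin n → Set ℝ) (hI : ∀ i, IsClosedIntervalType (I i))
    (U : Set (Fin n → ℝ)) (hU : U = Set.univ.pi I)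
    (w : (Fin n → ℝ) → ℝ) (hw : IsDensityOn w U)
    (p q : ℝ) (hp : 1 < p) (hq : q = p / (p - 1))
    (hsmir : SmirnovProperty w q)
    (gi : Fin n → ℝ → ℝ)
    (Φ Ψ : Fin n → ℝ → ℝ)
    (hΦ1 : ∀ i, MemLp (fun ξ => Φ i (ξ i)) 1 (wMeasure w))
    (hΨ1 : ∀ i, MemLp (fun ξ => Ψ i (ξ i)) 1 (wMeasure w))
    (hΦsolve : ∀ i : Fin n, ∀ᵐ t : ℝ,
      margC i (fun ξ =>
        (Real.sign ((1 / (n : ℝ)) * ∑ j, Φ j (ξ j)) *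
          |(1 / (n : ℝ)) * ∑ j, Φ j (ξ j)| ^ (1 / (p - 1))) * w ξ) t = gi i t)
    (hΨsolve : ∀ i : Fin n, ∀ᵐ t : ℝ,
      margC i (fun ξ =>
        (Real.sign ((1 / (n : ℝ)) * ∑ j, Ψ j (ξ j)) *
          |(1 / (n : ℝ)) * ∑ j, Ψ j (ξ j)| ^ (1 / (p - 1))) * w ξ) t = gi i t)
    (hΦnorm : ∀ i : Fin n, (i : ℕ) ≠ 0 → (∫ t : ℝ, Φ i t * margC i w t) = 0)
    (hΨnorm : ∀ i : Fin n, (i : ℕ) ≠ 0 → (∫ t : ℝ, Ψ i t * margC i w t) = 0)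
    (hΦmem : MemLp (fun ξ =>
        Real.sign ((1 / (n : ℝ)) * ∑ j, Φ j (ξ j)) *
          |(1 / (n : ℝ)) * ∑ j, Φ j (ξ j)| ^ (1 / (p - 1)))
      (ENNReal.ofReal p) (wMeasure w))
    (hΨmem : MemLp (fun ξ =>
        Real.sign ((1 / (n : ℝ)) * ∑ j, Ψ j (ξ j)) *
          |(1 / (n : ℝ)) * ∑ j, Ψ j (ξ j)| ^ (1 / (p - 1)))
      (ENNReal.ofReal p) (wMeasure w)) :
    ∀ i : Fin n,
      ∀ᵐ t ∂(volume.withDensity (fun s => ENNReal.ofReal (margC i w s))),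
        Φ i t = Ψ i t := by
  intro i
  subst hU
  have := hw.isProbabilityMeasure
  have hpq : p.HolderConjugate q := (Real.holderConjugate_iff_eq_conjExponent hp).2 hq
  have hΦ1' j := memLp_one_iff_integrable.1 (hΦ1 j)
  have hΨ1' j := memLp_one_iff_integrable.1 (hΨ1 j)
  have hmean : coordMean Φ =ᵐ[wMeasure w] coordMean Ψ :=
    coordMean_ae_eq_of_margC_eq hw.measurable hw.nonneg hpq hsmir hΦ1 hΨ1 hΦmem hΨmem fun j => by
      filter_upwards [hΦsolve j, hΨsolve j] with t hΦt hΨt using hΦt.trans hΨt.symm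
  have hn : (n : ℝ) ≠ 0 := Nat.cast_ne_zero.2 i.pos.ne'
  have hsum : ∀ᵐ ξ ∂wMeasure w, ∑ j, (Φ j (ξ j) - Ψ j (ξ j)) = 0 := by
    filter_upwards [hmean] with ξ h
    rw [Finset.sum_sub_distrib, sub_eq_zero]
    simpa [coordMean, hn] using h
  have hnorm (j : Fin n) (hj : j ≠ ⟨0, i.pos⟩) :
      ∫ ξ, (Φ j (ξ j) - Ψ j (ξ j)) ∂wMeasure w = 0 := by
    have hj : (j : ℕ) ≠ 0 := fun h => hj (Fin.ext h)
    rw [integral_sub (hΦ1' j) (hΨ1' j),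
      integral_apply_wMeasure hw.measurable hw.nonneg j (hΦ1' j),
      integral_apply_wMeasure hw.measurable hw.nonneg j (hΨ1' j), hΦnorm j hj, hΨnorm j hj,
      sub_zero]
  filter_upwards [ae_eq_zero_of_sum_eq_zero (D := fun j t => Φ j t - Ψ j t)
    (fun j => (hI j).volume_ne_zero) hw (fun j => (hΦ1' j).sub (hΨ1' j)) hsum _ hnorm i]
    with t ht using sub_eq_zero.1 ht

/-- uniqueness part of Theorem `th: main4`: under (★) and the Smirnov
property for `q = p/(p-1)`, two normalized solutions `Φᵢ`, `Ψᵢ` of the integral-equation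
system with the same marginal data `gᵢ`, whose associated functions
`sign(Φ̄)|Φ̄|^{1/(p-1)}`, `sign(Ψ̄)|Ψ̄|^{1/(p-1)}` are in `L^p(w)`, coincide:
`Φᵢ = Ψᵢ` holds `wᵢ`-almost everywhere for every `i`. -/
theorem uniqueness_of_solutions
    {n : ℕ} (hn : 1 ≤ n) (I : Fin n → Set ℝ) (hI : ∀ i, IsClosedIntervalType (I i))
    (U : Set (Fin n → ℝ)) (hU : U = Set.univ.pi I)
    (w : (Fin n → ℝ) → ℝ) (hw : IsDensityOn w U)
    (p q : ℝ) (hp : 1 < p) (hq : q = p / (p - 1))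
    (hstar : StarCondition w p) (hsmir : SmirnovProperty w q)
    (gi : Fin n → ℝ → ℝ)
    (hgi : ∀ i, MemLp (fun ξ => gi i (ξ i)) (ENNReal.ofReal p) (wMeasure w))
    (Φ Ψ : Fin n → ℝ → ℝ)
    (hΦ1 : ∀ i, MemLp (fun ξ => Φ i (ξ i)) 1 (wMeasure w))
    (hΨ1 : ∀ i, MemLp (fun ξ => Ψ i (ξ i)) 1 (wMeasure w))
    (hΦsolve : ∀ i : Fin n, ∀ᵐ t : ℝ,
      margC i (fun ξ =>
        (Real.sign ((1 / (n : ℝ)) * ∑ j, Φ j (ξ j)) *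
          |(1 / (n : ℝ)) * ∑ j, Φ j (ξ j)| ^ (1 / (p - 1))) * w ξ) t = gi i t)
    (hΨsolve : ∀ i : Fin n, ∀ᵐ t : ℝ,
      margC i (fun ξ =>
        (Real.sign ((1 / (n : ℝ)) * ∑ j, Ψ j (ξ j)) *
          |(1 / (n : ℝ)) * ∑ j, Ψ j (ξ j)| ^ (1 / (p - 1))) * w ξ) t = gi i t)
    (hΦnorm : ∀ i : Fin n, (i : ℕ) ≠ 0 → (∫ t : ℝ, Φ i t * margC i w t) = 0)
    (hΨnorm : ∀ i : Fin n, (i : ℕ) ≠ 0 → (∫ t : ℝ, Ψ i t * margC i w t) = 0)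
    (hΦmem : MemLp (fun ξ =>
        Real.sign ((1 / (n : ℝ)) * ∑ j, Φ j (ξ j)) *
          |(1 / (n : ℝ)) * ∑ j, Φ j (ξ j)| ^ (1 / (p - 1)))
      (ENNReal.ofReal p) (wMeasure w))
    (hΨmem : MemLp (fun ξ =>
        Real.sign ((1 / (n : ℝ)) * ∑ j, Ψ j (ξ j)) *
          |(1 / (n : ℝ)) * ∑ j, Ψ j (ξ j)| ^ (1 / (p - 1)))
      (ENNReal.ofReal p) (wMeasure w)) :
    ∀ i : Fin n,
      ∀ᵐ t ∂(volume.withDensity (fun s => ENNReal.ofReal (margC i w s))),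
        Φ i t = Ψ i t :=
  uniqueness_of_solutions_general I hI U hU w hw p q hp hq hsmir gi Φ Ψ hΦ1 hΨ1 hΦsolve hΨsolve
    hΦnorm hΨnorm hΦmem hΨmem
end
end

section
/- Let q > 1, let w₀ be a strictly positive density on ℝ², let (θ_i)_{i≥1} be positive reals with ∑_{i≥1} θ_i = 1, and let f = ∑_{i≥1} f_i·1_{[i,i+1)} and g = ∑_{i≥1} g_i·1_{[i,i+1)} be step functions with f(x), g(y) ∈ L^q(w₀), satisfying ∑_{i≥1} |f_i|^q θ_i = ∑_{i≥1} |g_i|^q θ_i = ∞, ∑_{i≥1} |f_i| θ_i < ∞, ∑_{i≥1} |g_i| θ_i < ∞, and ∑_{i≥1} |f_i + g_i|^q θ_i < ∞. Then for every α ∈ (0,1) the function w(x,y) := α·w₀(x,y) + (1−α)·∑_{i≥1} θ_i·1_{[i,i+1)}(x)·1_{[i,i+1)}(y) is a strictly positive density on ℝ², f(x) and g(y) belong to L^1(w), the function (x,y) ↦ f(x)+g(y) belongs to L^q(w), but f(x) ∉ L^q(w) and g(y) ∉ L^q(w); hence w does not satisfy the Smirnov property for exponent q. -/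
open MeasureTheory

noncomputable section

/-- The weighted measure `w(x,y)dxdy` on `ℝ²`. -/
def wMeasure2 (w : ℝ × ℝ → ℝ) : Measure (ℝ × ℝ) :=
  volume.withDensity (fun z => ENNReal.ofReal (w z))

/-- `w` is a strictly positive (probability) density on `ℝ²`. -/
def IsDensity2 (w : ℝ × ℝ → ℝ) : Prop :=
  Measurable w ∧ (∀ z, 0 < w z) ∧ (∫ z, w z) = 1

/-- The Smirnov property on `ℝ²` for exponent `q`: whenever `f(x)+g(y) ∈ L^q(w)` with
`f(x), g(y) ∈ L^1(w)`, then `f(x), g(y) ∈ L^q(w)`. -/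
def SmirnovProperty2 (w : ℝ × ℝ → ℝ) (q : ℝ) : Prop :=
  ∀ f g : ℝ → ℝ, Measurable f → Measurable g →
    MemLp (fun z : ℝ × ℝ => f z.1) 1 (wMeasure2 w) →
    MemLp (fun z : ℝ × ℝ => g z.2) 1 (wMeasure2 w) →
    MemLp (fun z : ℝ × ℝ => f z.1 + g z.2) (ENNReal.ofReal q) (wMeasure2 w) →
    MemLp (fun z : ℝ × ℝ => f z.1) (ENNReal.ofReal q) (wMeasure2 w) ∧
    MemLp (fun z : ℝ × ℝ => g z.2) (ENNReal.ofReal q) (wMeasure2 w)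

/-- The step function `∑_{i ≥ 1} c_i · 1_{[i, i+1)}`, with coefficients indexed so that
`c k` is the value on `[k+1, k+2)`. -/
def stepFun (c : ℕ → ℝ) (x : ℝ) : ℝ :=
  ∑' k : ℕ, c k * Set.indicator (Set.Ico ((k : ℝ) + 1) ((k : ℝ) + 2)) 1 x

/-- The diagonal density `∑_{i ≥ 1} θ_i · 1_{[i,i+1)}(x) · 1_{[i,i+1)}(y)`. -/
def diagDensity (θ : ℕ → ℝ) (z : ℝ × ℝ) : ℝ :=
  ∑' k : ℕ, θ k * Set.indicator (Set.Ico ((k : ℝ) + 1) ((k : ℝ) + 2)) 1 z.1 *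
    Set.indicator (Set.Ico ((k : ℝ) + 1) ((k : ℝ) + 2)) 1 z.2

/-! The measure of `w = α w₀ + (1 - α) w_diag` is `α μ₀ + (1 - α) μ_diag`, so a function lies in
`L^p(w)` iff it lies in both `L^p(w₀)` and `L^p(w_diag)`. The measure `μ_diag` is
`∑ θ_k • (Lebesgue measure on the square [k+1, k+2)²)`, and on each such square `f(x)`, `g(y)`
and `f(x) + g(y)` are constant; hence membership in `L^p(w_diag)` is exactly the convergence of
`∑ |c_k|^p θ_k` for the corresponding coefficients `c_k`. The hypotheses on the series then
decide every membership, and `f(x)`, `g(y)` witness the failure of the Smirnov property. -/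

open MeasureTheory Set Function
open scoped ENNReal

lemma tsum_indicator_apply_of_mem {ι α M : Type*} [AddCommMonoid M] [TopologicalSpace M]
    {s : ι → Set α} (hs : Pairwise (Disjoint on s)) (f : ι → α → M) {i : ι} {x : α}
    (hx : x ∈ s i) : ∑' j, (s j).indicator (f j) x = f i x := by
  rw [tsum_eq_single i fun j hj => indicator_of_notMem
    (fun hxj => disjoint_left.1 (hs hj) hxj hx) _, indicator_of_mem hx]

lemma subsingleton_support_indicator_apply {ι α M : Type*} [Zero M] {s : ι → Set α}
    (hs : Pairwise (Disjoint on s)) (f : ι → α → M) (x : α) :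
    (support fun i => (s i).indicator (f i) x).Subsingleton := by
  intro i hi j hj
  by_contra hij
  exact disjoint_left.1 (hs hij) (mem_of_indicator_ne_zero hi) (mem_of_indicator_ne_zero hj)

lemma tsum_ofReal_lt_top_iff {ι : Type*} {a : ι → ℝ} (ha : ∀ i, 0 ≤ a i) :
    ∑' i, ENNReal.ofReal (a i) < ∞ ↔ Summable a :=
  ⟨fun h => by simpa [ENNReal.toReal_ofReal (ha _)] using ENNReal.summable_toReal h.ne,
    Summable.tsum_ofReal_lt_top⟩

section MemLpMeasure

variable {α : Type*} [MeasurableSpace α] {μ ν : Measure α} {p : ℝ≥0∞} {f : α → ℝ}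

lemma memLp_add_measure_iff (hp0 : p ≠ 0) (hp : p ≠ ∞) :
    MemLp f p (μ + ν) ↔ MemLp f p μ ∧ MemLp f p ν := by
  refine ⟨fun h => ⟨h.left_of_add_measure, h.right_of_add_measure⟩, fun ⟨hμ, hν⟩ => ?_⟩
  refine ⟨hμ.1.add_measure hν.1, ?_⟩
  rw [eLpNorm_lt_top_iff_lintegral_rpow_enorm_lt_top hp0 hp, lintegral_add_measure]
  exact ENNReal.add_lt_top.2 ⟨(eLpNorm_lt_top_iff_lintegral_rpow_enorm_lt_top hp0 hp).1 hμ.2,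
    (eLpNorm_lt_top_iff_lintegral_rpow_enorm_lt_top hp0 hp).1 hν.2⟩

lemma memLp_smul_measure_iff {c : ℝ≥0∞} (hc0 : c ≠ 0) (hc : c ≠ ∞) :
    MemLp f p (c • μ) ↔ MemLp f p μ := by
  refine ⟨fun h => ?_, fun h => h.smul_measure hc⟩
  simpa [smul_smul, ENNReal.inv_mul_cancel hc0 hc] using
    h.smul_measure (c := c⁻¹) (ENNReal.inv_ne_top.2 hc0)

end MemLpMeasure

section Density

variable {w w₀ w₁ : ℝ × ℝ → ℝ}

lemma IsDensity2.integrable (hw : IsDensity2 w) : Integrable w := by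
  by_contra h
  exact zero_ne_one (integral_undef h ▸ hw.2.2)

lemma IsDensity2.isProbabilityMeasure (hw : IsDensity2 w) : IsProbabilityMeasure (wMeasure2 w) :=
  ⟨by rw [wMeasure2, withDensity_apply _ MeasurableSet.univ, Measure.restrict_univ,
    ← ofReal_integral_eq_lintegral_ofReal hw.integrable (ae_of_all _ fun z => (hw.2.1 z).le),
    hw.2.2, ENNReal.ofReal_one]⟩

lemma IsDensity2.mix (hw₀ : IsDensity2 w₀) (hw₁m : Measurable w₁) (hw₁ : 0 ≤ w₁)
    (hw₁i : Integrable w₁) (hw₁1 : ∫ z, w₁ z = 1) {α : ℝ} (hα0 : 0 < α) (hα1 : α ≤ 1) :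
    IsDensity2 (fun z => α * w₀ z + (1 - α) * w₁ z) := by
  refine ⟨(hw₀.1.const_mul α).add (hw₁m.const_mul _), fun z => ?_, ?_⟩
  · exact add_pos_of_pos_of_nonneg (mul_pos hα0 (hw₀.2.1 z))
      (mul_nonneg (sub_nonneg.2 hα1) (hw₁ z))
  · rw [integral_add (hw₀.integrable.const_mul α) (hw₁i.const_mul _), integral_const_mul,
      integral_const_mul, hw₀.2.2, hw₁1]
    ring

lemma wMeasure2_mix (hw₀m : Measurable w₀) (hw₀ : 0 ≤ w₀) (hw₁ : 0 ≤ w₁) {a b : ℝ}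
    (ha : 0 ≤ a) (hb : 0 ≤ b) :
    wMeasure2 (fun z => a * w₀ z + b * w₁ z) =
      ENNReal.ofReal a • wMeasure2 w₀ + ENNReal.ofReal b • wMeasure2 w₁ := by
  have hdens : (fun z => ENNReal.ofReal (a * w₀ z + b * w₁ z)) =
      ENNReal.ofReal a • (fun z => ENNReal.ofReal (w₀ z)) +
        ENNReal.ofReal b • (fun z => ENNReal.ofReal (w₁ z)) := by
    ext z
    simp only [Pi.add_apply, Pi.smul_apply, smul_eq_mul]
    rw [ENNReal.ofReal_add (mul_nonneg ha (hw₀ z)) (mul_nonneg hb (hw₁ z)),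
      ENNReal.ofReal_mul ha, ENNReal.ofReal_mul hb]
  have hw₀m' : Measurable fun z => ENNReal.ofReal (w₀ z) := ENNReal.measurable_ofReal.comp hw₀m
  rw [wMeasure2, hdens, withDensity_add_left (hw₀m'.const_smul _),
    withDensity_smul _ hw₀m', withDensity_smul' _ _ ENNReal.ofReal_ne_top]
  rfl

lemma memLp_wMeasure2_mix_iff (hw₀m : Measurable w₀) (hw₀ : 0 ≤ w₀) (hw₁ : 0 ≤ w₁) {α : ℝ}
    (hα0 : 0 < α) (hα1 : α < 1) {u : ℝ × ℝ → ℝ} {p : ℝ≥0∞} (hp0 : p ≠ 0) (hp : p ≠ ∞) :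
    MemLp u p (wMeasure2 fun z => α * w₀ z + (1 - α) * w₁ z) ↔
      MemLp u p (wMeasure2 w₀) ∧ MemLp u p (wMeasure2 w₁) := by
  rw [wMeasure2_mix hw₀m hw₀ hw₁ hα0.le (sub_nonneg.2 hα1.le), memLp_add_measure_iff hp0 hp,
    memLp_smul_measure_iff (by simpa using hα0) ENNReal.ofReal_ne_top,
    memLp_smul_measure_iff (by simpa using hα1) ENNReal.ofReal_ne_top]

end Density

def stepInterval (k : ℕ) : Set ℝ := Ico ((k : ℝ) + 1) ((k : ℝ) + 2)

def diagSquare (k : ℕ) : Set (ℝ × ℝ) := stepInterval k ×ˢ stepInterval k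

lemma natFloor_of_mem_stepInterval {k : ℕ} {x : ℝ} (hx : x ∈ stepInterval k) :
    ⌊x⌋₊ = k + 1 :=
  Nat.floor_eq_on_Ico (k + 1) x ⟨by exact_mod_cast hx.1, by push_cast; linarith [hx.2]⟩

lemma pairwise_disjoint_stepInterval : Pairwise (Disjoint on stepInterval) := by
  intro j k hjk
  refine disjoint_left.2 fun x hj hk => hjk ?_
  have := (natFloor_of_mem_stepInterval hj).symm.trans (natFloor_of_mem_stepInterval hk)
  omega

lemma pairwise_disjoint_diagSquare : Pairwise (Disjoint on diagSquare) :=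
  fun _ _ hjk => (pairwise_disjoint_stepInterval hjk).set_prod_left _ _

lemma measurableSet_diagSquare (k : ℕ) : MeasurableSet (diagSquare k) :=
  measurableSet_Ico.prod measurableSet_Ico

lemma volume_diagSquare (k : ℕ) : volume (diagSquare k) = 1 := by
  rw [diagSquare, Measure.volume_eq_prod, Measure.prod_prod, stepInterval, Real.volume_Ico]
  norm_num

lemma stepFun_eq_tsum_indicator (c : ℕ → ℝ) (x : ℝ) :
    stepFun c x = ∑' k, (stepInterval k).indicator (fun _ => c k) x := by
  refine tsum_congr fun k => ?_
  simp only [indicator_apply, Pi.one_apply, mul_ite, mul_one, mul_zero, stepInterval]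

lemma stepFun_eq_of_mem {c : ℕ → ℝ} {k : ℕ} {x : ℝ} (hx : x ∈ stepInterval k) :
    stepFun c x = c k := by
  rw [stepFun_eq_tsum_indicator, tsum_indicator_apply_of_mem pairwise_disjoint_stepInterval _ hx]

lemma measurable_stepFun (c : ℕ → ℝ) : Measurable (stepFun c) :=
  Measurable.tsum fun _ => measurable_const.mul (measurable_one.indicator measurableSet_Ico)

section Diagonal

variable {θ : ℕ → ℝ}

lemma diagDensity_eq_tsum_indicator (θ : ℕ → ℝ) (z : ℝ × ℝ) :
    diagDensity θ z = ∑' k, (diagSquare k).indicator (fun _ => θ k) z := by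
  refine tsum_congr fun k => ?_
  rw [mul_assoc, ← indicator_prod_one]
  simp only [indicator_apply, Pi.one_apply, mul_ite, mul_one, mul_zero, diagSquare, stepInterval]

lemma measurable_diagDensity (θ : ℕ → ℝ) : Measurable (diagDensity θ) :=
  Measurable.tsum fun _ => (measurable_const.mul
    ((measurable_one.indicator measurableSet_Ico).comp measurable_fst)).mul
    ((measurable_one.indicator measurableSet_Ico).comp measurable_snd)

lemma diagDensity_nonneg (hθ : ∀ k, 0 ≤ θ k) : 0 ≤ diagDensity θ := fun z => by
  rw [diagDensity_eq_tsum_indicator]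
  exact tsum_nonneg fun k => indicator_nonneg (fun _ _ => hθ k) z

lemma ofReal_diagDensity (hθ : ∀ k, 0 ≤ θ k) :
    (fun z => ENNReal.ofReal (diagDensity θ z)) =
      ∑' k, (diagSquare k).indicator (fun _ => ENNReal.ofReal (θ k)) := by
  ext z
  have hfin := subsingleton_support_indicator_apply pairwise_disjoint_diagSquare
    (fun k _ => θ k) z
  rw [diagDensity_eq_tsum_indicator, ENNReal.ofReal_tsum_of_nonneg
    (fun k => indicator_nonneg (fun _ _ => hθ k) z) (summable_of_hasFiniteSupport hfin.finite),
    ENNReal.tsum_apply]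
  exact tsum_congr fun k => (congrFun (indicator_comp_of_zero ENNReal.ofReal_zero) z).symm

lemma wMeasure2_diagDensity (hθ : ∀ k, 0 ≤ θ k) :
    wMeasure2 (diagDensity θ) =
      Measure.sum fun k => ENNReal.ofReal (θ k) • volume.restrict (diagSquare k) := by
  rw [wMeasure2, ofReal_diagDensity hθ,
    withDensity_tsum fun k => measurable_const.indicator (measurableSet_diagSquare k)]
  congr with k : 1
  rw [withDensity_indicator (measurableSet_diagSquare k), withDensity_const]

lemma lintegral_wMeasure2_diagDensity (hθ : ∀ k, 0 ≤ θ k) {F : ℝ × ℝ → ℝ≥0∞} {v : ℕ → ℝ≥0∞}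
    (hFv : ∀ k, ∀ z ∈ diagSquare k, F z = v k) :
    ∫⁻ z, F z ∂wMeasure2 (diagDensity θ) = ∑' k, v k * ENNReal.ofReal (θ k) := by
  rw [wMeasure2_diagDensity hθ, lintegral_sum_measure]
  refine tsum_congr fun k => ?_
  rw [lintegral_smul_measure, setLIntegral_congr_fun (measurableSet_diagSquare k) (hFv k),
    setLIntegral_const, volume_diagSquare, mul_one, smul_eq_mul, mul_comm]

lemma lintegral_ofReal_diagDensity (hθ : ∀ k, 0 ≤ θ k) :
    ∫⁻ z, ENNReal.ofReal (diagDensity θ z) = ∑' k, ENNReal.ofReal (θ k) := by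
  have h := lintegral_wMeasure2_diagDensity hθ (F := fun _ => 1) (v := fun _ => 1)
    fun _ _ _ => rfl
  simpa only [lintegral_one, wMeasure2, withDensity_apply _ MeasurableSet.univ,
    Measure.restrict_univ, one_mul] using h

lemma integrable_diagDensity (hθ : ∀ k, 0 ≤ θ k) (hθs : Summable θ) :
    Integrable (diagDensity θ) := by
  rw [← lintegral_ofReal_ne_top_iff_integrable (measurable_diagDensity θ).aestronglyMeasurable
    (ae_of_all _ (diagDensity_nonneg hθ)), lintegral_ofReal_diagDensity hθ]
  exact hθs.tsum_ofReal_ne_top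

lemma integral_diagDensity (hθ : ∀ k, 0 ≤ θ k) (hθs : Summable θ) :
    ∫ z, diagDensity θ z = ∑' k, θ k := by
  rw [integral_eq_lintegral_of_nonneg_ae (ae_of_all _ (diagDensity_nonneg hθ))
    (measurable_diagDensity θ).aestronglyMeasurable, lintegral_ofReal_diagDensity hθ,
    ← ENNReal.ofReal_tsum_of_nonneg hθ hθs, ENNReal.toReal_ofReal (tsum_nonneg hθ)]

lemma memLp_wMeasure2_diagDensity_iff (hθ : ∀ k, 0 ≤ θ k) {q : ℝ} (hq : 0 < q)
    {u : ℝ × ℝ → ℝ} (hu : Measurable u) {v : ℕ → ℝ} (huv : ∀ k, ∀ z ∈ diagSquare k, u z = v k) :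
    MemLp u (ENNReal.ofReal q) (wMeasure2 (diagDensity θ)) ↔
      Summable fun k => |v k| ^ q * θ k := by
  have hnorm : ∫⁻ z, ‖u z‖ₑ ^ q ∂wMeasure2 (diagDensity θ) =
      ∑' k, ENNReal.ofReal (|v k| ^ q * θ k) := by
    rw [lintegral_wMeasure2_diagDensity hθ (v := fun k => ENNReal.ofReal (|v k| ^ q))
      fun k z hz => by rw [huv k z hz, Real.enorm_eq_ofReal_abs,
        ENNReal.ofReal_rpow_of_nonneg (abs_nonneg _) hq.le]]
    exact tsum_congr fun k => (ENNReal.ofReal_mul (by positivity)).symm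
  rw [MemLp, eLpNorm_lt_top_iff_lintegral_rpow_enorm_lt_top (by simpa using hq)
    ENNReal.ofReal_ne_top, ENNReal.toReal_ofReal hq.le, hnorm,
    tsum_ofReal_lt_top_iff fun k => by have := hθ k; positivity]
  exact and_iff_right hu.aestronglyMeasurable

lemma memLp_stepFun_fst_diagDensity_iff (hθ : ∀ k, 0 ≤ θ k) {q : ℝ} (hq : 0 < q) (c : ℕ → ℝ) :
    MemLp (fun z : ℝ × ℝ => stepFun c z.1) (ENNReal.ofReal q) (wMeasure2 (diagDensity θ)) ↔
      Summable fun k => |c k| ^ q * θ k :=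
  memLp_wMeasure2_diagDensity_iff hθ hq ((measurable_stepFun c).comp measurable_fst)
    fun _ _ hz => stepFun_eq_of_mem hz.1

lemma memLp_stepFun_snd_diagDensity_iff (hθ : ∀ k, 0 ≤ θ k) {q : ℝ} (hq : 0 < q) (c : ℕ → ℝ) :
    MemLp (fun z : ℝ × ℝ => stepFun c z.2) (ENNReal.ofReal q) (wMeasure2 (diagDensity θ)) ↔
      Summable fun k => |c k| ^ q * θ k :=
  memLp_wMeasure2_diagDensity_iff hθ hq ((measurable_stepFun c).comp measurable_snd)
    fun _ _ hz => stepFun_eq_of_mem hz.2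

lemma memLp_stepFun_add_diagDensity_iff (hθ : ∀ k, 0 ≤ θ k) {q : ℝ} (hq : 0 < q)
    (f g : ℕ → ℝ) :
    MemLp (fun z : ℝ × ℝ => stepFun f z.1 + stepFun g z.2) (ENNReal.ofReal q)
        (wMeasure2 (diagDensity θ)) ↔
      Summable fun k => |f k + g k| ^ q * θ k :=
  memLp_wMeasure2_diagDensity_iff (u := fun z => stepFun f z.1 + stepFun g z.2) hθ hq
    (((measurable_stepFun f).comp measurable_fst).add ((measurable_stepFun g).comp measurable_snd))
    fun _ _ hz => by rw [stepFun_eq_of_mem hz.1, stepFun_eq_of_mem hz.2]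

end Diagonal

/-- the counterexample of Section `sec: counter`, in detail: mixing a
background density `w₀` with a diagonal singular part built from `(θ_i)` produces, for
every `α ∈ (0,1)`, a strictly positive density `w` for which the step functions `f`, `g`
satisfy `f(x), g(y) ∈ L^1(w)`, `f(x)+g(y) ∈ L^q(w)` but `f(x), g(y) ∉ L^q(w)`;
hence `w` fails the Smirnov property for `q`. -/
theorem counterexample_construction
    (q : ℝ) (hq : 1 < q)
    (w₀ : ℝ × ℝ → ℝ) (hw₀ : IsDensity2 w₀)
    (θ : ℕ → ℝ) (hθpos : ∀ k, 0 < θ k) (hθsum : HasSum θ 1)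
    (fc gc : ℕ → ℝ)
    (hfq0 : MemLp (fun z : ℝ × ℝ => stepFun fc z.1) (ENNReal.ofReal q) (wMeasure2 w₀))
    (hgq0 : MemLp (fun z : ℝ × ℝ => stepFun gc z.2) (ENNReal.ofReal q) (wMeasure2 w₀))
    (hfdiv : ¬ Summable (fun k => |fc k| ^ q * θ k))
    (hgdiv : ¬ Summable (fun k => |gc k| ^ q * θ k))
    (hfl1 : Summable (fun k => |fc k| * θ k))
    (hgl1 : Summable (fun k => |gc k| * θ k))
    (hsumq : Summable (fun k => |fc k + gc k| ^ q * θ k))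
    (α : ℝ) (hα0 : 0 < α) (hα1 : α < 1) :
    IsDensity2 (fun z => α * w₀ z + (1 - α) * diagDensity θ z) ∧
    MemLp (fun z : ℝ × ℝ => stepFun fc z.1) 1
      (wMeasure2 (fun z => α * w₀ z + (1 - α) * diagDensity θ z)) ∧
    MemLp (fun z : ℝ × ℝ => stepFun gc z.2) 1
      (wMeasure2 (fun z => α * w₀ z + (1 - α) * diagDensity θ z)) ∧
    MemLp (fun z : ℝ × ℝ => stepFun fc z.1 + stepFun gc z.2) (ENNReal.ofReal q)
      (wMeasure2 (fun z => α * w₀ z + (1 - α) * diagDensity θ z)) ∧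
    ¬ MemLp (fun z : ℝ × ℝ => stepFun fc z.1) (ENNReal.ofReal q)
      (wMeasure2 (fun z => α * w₀ z + (1 - α) * diagDensity θ z)) ∧
    ¬ MemLp (fun z : ℝ × ℝ => stepFun gc z.2) (ENNReal.ofReal q)
      (wMeasure2 (fun z => α * w₀ z + (1 - α) * diagDensity θ z)) ∧
    ¬ SmirnovProperty2 (fun z => α * w₀ z + (1 - α) * diagDensity θ z) q := by
  have hθ : ∀ k, 0 ≤ θ k := fun k => (hθpos k).le
  set w : ℝ × ℝ → ℝ := fun z => α * w₀ z + (1 - α) * diagDensity θ z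
  have hw : IsDensity2 w :=
    hw₀.mix (measurable_diagDensity θ) (diagDensity_nonneg hθ)
      (integrable_diagDensity hθ hθsum.summable)
      (by rw [integral_diagDensity hθ hθsum.summable, hθsum.tsum_eq]) hα0 hα1.le
  have := hw₀.isProbabilityMeasure
  have hmix {u : ℝ × ℝ → ℝ} {p : ℝ≥0∞} (hp0 : p ≠ 0) (hp : p ≠ ∞) :=
    memLp_wMeasure2_mix_iff (u := u) hw₀.1 (fun z => (hw₀.2.1 z).le) (diagDensity_nonneg hθ)
      hα0 hα1 hp0 hp
  have hq1 : 1 ≤ ENNReal.ofReal q := ENNReal.one_le_ofReal.2 hq.le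
  have hq0 : ENNReal.ofReal q ≠ 0 := (zero_lt_one.trans_le hq1).ne'
  have hf1 : MemLp (fun z : ℝ × ℝ => stepFun fc z.1) 1 (wMeasure2 w) :=
    (hmix one_ne_zero ENNReal.one_ne_top).2 ⟨hfq0.mono_exponent hq1,
      by simpa using (memLp_stepFun_fst_diagDensity_iff hθ one_pos fc).2 (by simpa using hfl1)⟩
  have hg1 : MemLp (fun z : ℝ × ℝ => stepFun gc z.2) 1 (wMeasure2 w) :=
    (hmix one_ne_zero ENNReal.one_ne_top).2 ⟨hgq0.mono_exponent hq1,
      by simpa using (memLp_stepFun_snd_diagDensity_iff hθ one_pos gc).2 (by simpa using hgl1)⟩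
  have hfg : MemLp (fun z : ℝ × ℝ => stepFun fc z.1 + stepFun gc z.2) (ENNReal.ofReal q)
      (wMeasure2 w) :=
    (hmix hq0 ENNReal.ofReal_ne_top).2 ⟨hfq0.add hgq0,
      (memLp_stepFun_add_diagDensity_iff hθ (one_pos.trans hq) fc gc).2 hsumq⟩
  have hfq : ¬ MemLp (fun z : ℝ × ℝ => stepFun fc z.1) (ENNReal.ofReal q) (wMeasure2 w) :=
    fun h => hfdiv <| (memLp_stepFun_fst_diagDensity_iff hθ (one_pos.trans hq) fc).1
      ((hmix hq0 ENNReal.ofReal_ne_top).1 h).2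
  have hgq : ¬ MemLp (fun z : ℝ × ℝ => stepFun gc z.2) (ENNReal.ofReal q) (wMeasure2 w) :=
    fun h => hgdiv <| (memLp_stepFun_snd_diagDensity_iff hθ (one_pos.trans hq) gc).1
      ((hmix hq0 ENNReal.ofReal_ne_top).1 h).2
  exact ⟨hw, hf1, hg1, hfg, hfq, hgq, fun hS =>
    hfq (hS _ _ (measurable_stepFun fc) (measurable_stepFun gc) hf1 hg1 hfg).1⟩
end
end
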